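/- arXiv:1004.5440 — 5 statements merged into one kernel-verified Lean document; each statement's English description precedes it below -/
import Mathlib

section
/- Let p be a prime, μ ≥ 1, m = p^μ, n ≥ 3, and let A be a symmetric n×n matrix over Z/mZ such that A₁₁ is not a unit of Z/mZ and A₁₂ is a unit of Z/mZ. Then there exists a lower-triangular n×n matrix V over Z/mZ with every diagonal entry equal to 1 and with V₂₁ = 0, such that the matrix B = V·A·Vᵀ agrees with A in its top-left 2×2 block (Bᵢⱼ = Aᵢⱼ for i,j ∈ {1,2}) and satisfies Bᵢⱼ = 0 whenever exactly one of i, j lies in {1,2}; in particular B is symmetric and det B = det A = (A₁₁A₂₂ − A₁₂²) · det A'', where A'' is the lower-right (n-2)×(n-2) block of B. -/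
/-!
The leading 2 × 2 block `D` of `A` has determinant `A₁₁A₂₂ − A₁₂²`, a unit: `ℤ/p^μ` is
local, `A₁₁` lies in its maximal ideal and `A₁₂` does not. Writing `A = [[D, Cᵀ], [C, E]]`,
the unit lower-triangular `V = [[1, 0], [−C D⁻¹, 1]]` gives
`V A Vᵀ = diag(D, E − C D⁻¹ Cᵀ)`, and `det V = 1`.
-/

open Matrix

theorem ZMod.isLocalHom_castHom_prime_pow {p μ : ℕ} [Fact p.Prime] (hμ : μ ≠ 0) :
    IsLocalHom (ZMod.castHom (dvd_pow_self p hμ) (ZMod p)) := by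
  refine ⟨fun a ha => ?_⟩
  rw [← ZMod.natCast_zmod_val a, map_natCast, ZMod.isUnit_iff_coprime] at ha
  rw [← ZMod.natCast_zmod_val a, ZMod.isUnit_iff_coprime]
  exact ha.pow_right μ

theorem ZMod.isLocalRing_prime_pow {p μ : ℕ} [Fact p.Prime] (hμ : μ ≠ 0) :
    IsLocalRing (ZMod (p ^ μ)) :=
  have := ZMod.isLocalHom_castHom_prime_pow (p := p) hμ
  (ZMod.castHom (dvd_pow_self p hμ) (ZMod p)).domain_isLocalRing

theorem IsLocalRing.isUnit_mul_sub_sq {R : Type*} [CommRing R] [IsLocalRing R] {a b : R}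
    (c : R) (ha : ¬IsUnit a) (hb : IsUnit b) : IsUnit (a * c - b ^ 2) := by
  by_contra h
  have hac : a * c ∈ maximalIdeal R := Ideal.mul_mem_right c _ ha
  have hb2 : b ^ 2 ∈ maximalIdeal R := sub_sub_cancel (a * c) (b ^ 2) ▸ sub_mem hac h
  exact hb2 (hb.pow 2)

def finTwoSumEquiv (m : ℕ) : Fin 2 ⊕ Fin m ≃ Fin (m + 2) :=
  finSumFinEquiv.trans (finCongr (Nat.add_comm 2 m))

theorem finTwoSumEquiv_symm_apply_of_lt {m : ℕ} {i : Fin (m + 2)} (hi : i.val < 2) :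
    (finTwoSumEquiv m).symm i = .inl ⟨i, hi⟩ := by
  rw [Equiv.symm_apply_eq]; ext; simp [finTwoSumEquiv]

theorem finTwoSumEquiv_symm_apply_of_le {m : ℕ} {i : Fin (m + 2)} (hi : 2 ≤ i.val) :
    (finTwoSumEquiv m).symm i = .inr ⟨i - 2, by omega⟩ := by
  rw [Equiv.symm_apply_eq]; ext; simp [finTwoSumEquiv]; omega

@[simp] theorem finTwoSumEquiv_inl {m : ℕ} (k : Fin 2) :
    finTwoSumEquiv m (.inl k) = ⟨k, by omega⟩ := by
  ext; simp [finTwoSumEquiv]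

@[simp] theorem finTwoSumEquiv_symm_succ_succ {m : ℕ} (k : Fin m) :
    (finTwoSumEquiv m).symm k.succ.succ = .inr k := by
  rw [finTwoSumEquiv_symm_apply_of_le (by simp)]; simp

namespace Matrix

theorem IsSymm.eq_fromBlocks_toBlocks {ι κ α : Type*}
    {M : Matrix (ι ⊕ κ) (ι ⊕ κ) α} (hM : M.IsSymm) :
    M = Matrix.fromBlocks M.toBlocks₁₁ M.toBlocks₂₁ᵀ M.toBlocks₂₁ M.toBlocks₂₂ := by
  conv_lhs => rw [← fromBlocks_toBlocks M]
  congr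
  ext i j
  exact hM.apply _ _

section SchurElimination

variable {ι κ R : Type*} [Fintype ι] [Fintype κ] [DecidableEq ι] [DecidableEq κ] [CommRing R]

noncomputable def schurElimination (D : Matrix ι ι R) (C : Matrix κ ι R) :
    Matrix (ι ⊕ κ) (ι ⊕ κ) R :=
  fromBlocks 1 0 (-(C * D⁻¹)) 1

theorem det_schurElimination (D : Matrix ι ι R) (C : Matrix κ ι R) :
    (schurElimination D C).det = 1 := by
  simp [schurElimination]

theorem schurElimination_mul_fromBlocks_mul_transpose {D : Matrix ι ι R} (hD : D.IsSymm)
    (hdet : IsUnit D.det) (C : Matrix κ ι R) (E : Matrix κ κ R) :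
    schurElimination D C * fromBlocks D Cᵀ C E * (schurElimination D C)ᵀ =
      fromBlocks D 0 0 (E - C * D⁻¹ * Cᵀ) := by
  have hinvT : D⁻¹ᵀ = D⁻¹ := by rw [transpose_nonsing_inv, hD.eq]
  simp [schurElimination, fromBlocks_transpose, fromBlocks_multiply, transpose_mul, hinvT,
    Matrix.mul_assoc, nonsing_inv_mul _ hdet, mul_nonsing_inv_cancel_left _ _ hdet, neg_add_eq_sub]

end SchurElimination

section FinTwoSum

variable {R : Type*} [CommRing R] {m : ℕ} (D : Matrix (Fin 2) (Fin 2) R)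
  (C : Matrix (Fin m) (Fin 2) R)

theorem schurElimination_submatrix_apply_of_lt {i j : Fin (m + 2)} (hij : i < j) :
    (schurElimination D C).submatrix (finTwoSumEquiv m).symm (finTwoSumEquiv m).symm i j = 0 := by
  rw [Fin.lt_def] at hij
  rcases lt_or_ge i.val 2 with hi | hi <;> rcases lt_or_ge j.val 2 with hj | hj <;>
    simp [finTwoSumEquiv_symm_apply_of_lt, finTwoSumEquiv_symm_apply_of_le, hi, hj,
      schurElimination, one_apply, Fin.ext_iff] <;> omega

theorem schurElimination_submatrix_apply_self (i : Fin (m + 2)) :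
    (schurElimination D C).submatrix (finTwoSumEquiv m).symm (finTwoSumEquiv m).symm i i = 1 := by
  rcases lt_or_ge i.val 2 with hi | hi <;>
    simp [finTwoSumEquiv_symm_apply_of_lt, finTwoSumEquiv_symm_apply_of_le, hi, schurElimination]

theorem schurElimination_submatrix_apply_one_zero :
    (schurElimination D C).submatrix (finTwoSumEquiv m).symm (finTwoSumEquiv m).symm 1 0 = 0 := by
  simp [finTwoSumEquiv_symm_apply_of_lt (i := 0) (by simp),
    finTwoSumEquiv_symm_apply_of_lt (i := 1) (by simp), schurElimination]

end FinTwoSum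

theorem exists_twoByTwoPivot_elimination_of_isSymm {R : Type*} [CommRing R] {m : ℕ}
    {A : Matrix (Fin (m + 2)) (Fin (m + 2)) R} (hA : A.IsSymm)
    (hd : IsUnit (A 0 0 * A 1 1 - A 0 1 ^ 2)) :
    ∃ V : Matrix (Fin (m + 2)) (Fin (m + 2)) R,
      (∀ i j : Fin (m + 2), i < j → V i j = 0) ∧
      (∀ i : Fin (m + 2), V i i = 1) ∧
      V 1 0 = 0 ∧
      (∀ i j : Fin (m + 2), i.val < 2 → j.val < 2 → (V * A * Vᵀ) i j = A i j) ∧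
      (∀ i j : Fin (m + 2), (i.val < 2 ∧ 2 ≤ j.val) ∨ (2 ≤ i.val ∧ j.val < 2) →
        (V * A * Vᵀ) i j = 0) ∧
      (V * A * Vᵀ).IsSymm ∧
      (V * A * Vᵀ).det = A.det ∧
      A.det = (A 0 0 * A 1 1 - A 0 1 ^ 2) *
        ((V * A * Vᵀ).submatrix (fun i : Fin m => i.succ.succ) (fun i => i.succ.succ)).det := by
  set e := finTwoSumEquiv m
  set M := A.submatrix e e
  set D := M.toBlocks₁₁
  set C := M.toBlocks₂₁
  set S := M.toBlocks₂₂ - C * D⁻¹ * Cᵀ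
  set V := (schurElimination D C).submatrix e.symm e.symm
  have hM : (fromBlocks D Cᵀ C M.toBlocks₂₂).submatrix e.symm e.symm = A := by
    rw [← (hA.submatrix e).eq_fromBlocks_toBlocks]; simp
  have hD : D.IsSymm := .ext fun _ _ => hA.apply _ _
  have hdetD : D.det = A 0 0 * A 1 1 - A 0 1 ^ 2 := by
    simp [det_fin_two, D, M, e, toBlocks₁₁, hA.apply 0 1, sq]
  have hB : V * A * Vᵀ = (fromBlocks D 0 0 S).submatrix e.symm e.symm := by
    rw [← hM, transpose_submatrix, submatrix_mul_equiv, submatrix_mul_equiv,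
      schurElimination_mul_fromBlocks_mul_transpose hD (hdetD ▸ hd)]
  have hdet : (V * A * Vᵀ).det = A.det := by
    rw [det_mul, det_mul, det_transpose, det_submatrix_equiv_self, det_schurElimination]; ring
  have hS : (V * A * Vᵀ).submatrix (fun i : Fin m => i.succ.succ) (fun i => i.succ.succ) = S := by
    ext i j; simp [hB, e]
  refine ⟨V, fun _ _ => schurElimination_submatrix_apply_of_lt D C,
    schurElimination_submatrix_apply_self D C, schurElimination_submatrix_apply_one_zero D C,
    fun i j hi hj => ?_, ?_, ?_, hdet, ?_⟩
  · rw [hB, ← hM]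
    simp [e, finTwoSumEquiv_symm_apply_of_lt, hi, hj]
  · rintro i j (⟨hi, hj⟩ | ⟨hi, hj⟩) <;>
      simp [hB, e, finTwoSumEquiv_symm_apply_of_lt, finTwoSumEquiv_symm_apply_of_le, hi, hj]
  · simp [IsSymm, transpose_mul, hA.eq, Matrix.mul_assoc]
  · rw [hS, ← hdetD, ← det_fromBlocks_zero₂₁ D 0 S, ← det_submatrix_equiv_self e.symm, ← hB,
      hdet]

end Matrix

/-- Symmetric Gaussian elimination, 2×2 pivot case: if `A` is a symmetric `n × n`
matrix (`n ≥ 3`, here `n = n' + 3`) over `ZMod (p^μ)` with `A₁₁` not a unit and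
`A₁₂` a unit (indices `0`, `1` in Lean), then there is a unit lower-triangular `V`
with `V₂₁ = 0` such that `B = V * A * Vᵀ` agrees with `A` on the top-left `2 × 2`
block, vanishes where exactly one index lies in the first two, and
`det A = (A₁₁A₂₂ − A₁₂²) · det A''` with `A''` the lower-right block. -/
theorem symmetric_elimination_two_by_two_pivot (p : ℕ) (hp : p.Prime) (μ : ℕ)
    (hμ : 1 ≤ μ) (n : ℕ) (A : Matrix (Fin (n + 3)) (Fin (n + 3)) (ZMod (p ^ μ)))
    (hA : A.IsSymm) (hA11 : ¬ IsUnit (A 0 0)) (hA12 : IsUnit (A 0 1)) :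
    ∃ V : Matrix (Fin (n + 3)) (Fin (n + 3)) (ZMod (p ^ μ)),
      (∀ i j : Fin (n + 3), i < j → V i j = 0) ∧
      (∀ i : Fin (n + 3), V i i = 1) ∧
      V 1 0 = 0 ∧
      (∀ i j : Fin (n + 3), i.val < 2 → j.val < 2 → (V * A * Vᵀ) i j = A i j) ∧
      (∀ i j : Fin (n + 3), (i.val < 2 ∧ 2 ≤ j.val) ∨ (2 ≤ i.val ∧ j.val < 2) →
        (V * A * Vᵀ) i j = 0) ∧
      (V * A * Vᵀ).IsSymm ∧
      (V * A * Vᵀ).det = A.det ∧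
      A.det = (A 0 0 * A 1 1 - A 0 1 ^ 2) *
        ((V * A * Vᵀ).submatrix (fun i : Fin (n + 1) => i.succ.succ) (fun i : Fin (n + 1) => i.succ.succ)).det := by
  have : Fact p.Prime := ⟨hp⟩
  have := ZMod.isLocalRing_prime_pow (p := p) (by omega : μ ≠ 0)
  exact exists_twoByTwoPivot_elimination_of_isSymm hA (IsLocalRing.isUnit_mul_sub_sq _ hA11 hA12)
end

section
/- Let p be a prime, q = 1/p, and let n ≥ 2 be an integer. Then P(n, p) = (1−q)·P(n−1, p) + q(1−q^{n−1})·P(n−2, p). -/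
/-!
Write a symmetric matrix as `[[a, vᵀ], [v, B]]`. If `a ≠ 0`, its determinant is `a` times
that of the Schur complement `B - a⁻¹ v vᵀ`, which runs over all symmetric matrices as `B`
does; so each of the `(p - 1) p^(n-1)` pairs `(a, v)` contributes `N(n-1)`. If `a = v = 0`
the matrix is singular. If `a = 0 ≠ v`, permute so that `v₁ ≠ 0`: the leading block
`[[0, v₁], [v₁, b]]` is then invertible, and the same Schur argument shows that each of the
`p^(n-1) - 1` such `v` contributes `p^(n-1) N(n-2)`. Dividing by `p^(n(n+1)/2)` gives the
recurrence.
-/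

/-- Number of symmetric `n × n` matrices over `ZMod m` with nonzero determinant. -/
noncomputable def Nsym (n m : ℕ) : ℕ :=
  Nat.card {A : Matrix (Fin n) (Fin n) (ZMod m) // A.IsSymm ∧ A.det ≠ 0}

/-- Proportion of symmetric `n × n` matrices over `ZMod m` with nonzero determinant. -/
noncomputable def Psym (n m : ℕ) : ℝ :=
  (Nsym n m : ℝ) / (m : ℝ) ^ (n * (n + 1) / 2)

open Matrix

namespace Matrix

lemma card_isSymm_reindex {α m n : Type*} (e : m ≃ n) (pr : Matrix n n α → Prop) :
    Nat.card {B : Matrix n n α // B.IsSymm ∧ pr B} =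
      Nat.card {B : Matrix m m α // B.IsSymm ∧ pr (B.submatrix e.symm e.symm)} := by
  refine Nat.card_congr (Equiv.subtypeEquiv (reindex e e).symm fun B => ?_)
  rw [reindex_symm]
  exact and_congr ⟨fun h => h.reindex _, fun h => by simpa using h.reindex e⟩ (by simp)

section Border

variable {α n : Type*}

def border (a : α) (v : n → α) (B : Matrix n n α) : Matrix (Unit ⊕ n) (Unit ⊕ n) α :=
  fromBlocks (of fun _ _ => a) (replicateRow Unit v) (replicateCol Unit v) B

@[simp] lemma border_inl_inl (a : α) (v : n → α) (B : Matrix n n α) (x y : Unit) :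
    border a v B (.inl x) (.inl y) = a := rfl

@[simp] lemma border_inl_inr (a : α) (v : n → α) (B : Matrix n n α) (x : Unit) (i : n) :
    border a v B (.inl x) (.inr i) = v i := rfl

@[simp] lemma border_inr_inl (a : α) (v : n → α) (B : Matrix n n α) (x : Unit) (i : n) :
    border a v B (.inr i) (.inl x) = v i := rfl

@[simp] lemma border_inr_inr (a : α) (v : n → α) (B : Matrix n n α) (i j : n) :
    border a v B (.inr i) (.inr j) = B i j := rfl

lemma isSymm_border_iff {a : α} {v : n → α} {B : Matrix n n α} :
    (border a v B).IsSymm ↔ B.IsSymm :=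
  ⟨fun h => h.submatrix Sum.inr, fun h => by ext (_ | i) (_ | j) <;> simp [h.apply]⟩

def isSymmBorderEquiv (pr : Matrix (Unit ⊕ n) (Unit ⊕ n) α → Prop) :
    {A : Matrix (Unit ⊕ n) (Unit ⊕ n) α // A.IsSymm ∧ pr A} ≃
      Σ av : α × (n → α), {B : Matrix n n α // B.IsSymm ∧ pr (border av.1 av.2 B)} where
  toFun A := ⟨(A.1 (.inl ()) (.inl ()), fun i => A.1 (.inr i) (.inl ())),
    A.1.submatrix .inr .inr, A.2.1.submatrix _, by
      convert A.2.2
      ext (_ | i) (_ | j) <;> simp [A.2.1.apply]⟩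
  invFun x := ⟨border x.1.1 x.1.2 x.2.1, isSymm_border_iff.2 x.2.2.1, x.2.2.2⟩
  left_inv A := Subtype.ext <| by ext (_ | i) (_ | j) <;> simp [A.2.1.apply]
  right_inv := fun ⟨⟨a, v⟩, B, _⟩ => rfl

lemma card_isSymm_eq_sum_border [Fintype α] [Fintype n] [DecidableEq n]
    (pr : Matrix (Unit ⊕ n) (Unit ⊕ n) α → Prop) :
    Nat.card {A : Matrix (Unit ⊕ n) (Unit ⊕ n) α // A.IsSymm ∧ pr A} =
      ∑ av : α × (n → α),
        Nat.card {B : Matrix n n α // B.IsSymm ∧ pr (border av.1 av.2 B)} := by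
  rw [Nat.card_congr (isSymmBorderEquiv pr), Nat.card_sigma]

end Border

noncomputable def nonsingSymmCount (R n : Type*) [CommRing R] [Fintype n] [DecidableEq n] : ℕ :=
  Nat.card {A : Matrix n n R // A.IsSymm ∧ A.det ≠ 0}

lemma nonsingSymmCount_congr {R m n : Type*} [CommRing R] [Fintype m] [DecidableEq m] [Fintype n]
    [DecidableEq n] (e : m ≃ n) : nonsingSymmCount R m = nonsingSymmCount R n := by
  rw [nonsingSymmCount, nonsingSymmCount, card_isSymm_reindex e]
  simp only [det_submatrix_equiv_self]

variable {F : Type*} [Field F] {m n : Type*} [Fintype m] [DecidableEq m] [Fintype n] [DecidableEq n]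

/-- Symmetric matrices `B` with `det (fromBlocks H P Pᵀ B) ≠ 0` are the translates by the
symmetric Schur correction `Pᵀ H⁻¹ P` of the nonsingular ones. -/
lemma card_isSymm_det_fromBlocks_ne_zero {H : Matrix m m F} (hH : H.IsSymm) (hdet : H.det ≠ 0)
    (P : Matrix m n F) :
    Nat.card {B : Matrix n n F // B.IsSymm ∧ (fromBlocks H P Pᵀ B).det ≠ 0} =
      nonsingSymmCount F n := by
  have := invertibleOfIsUnitDet H hdet.isUnit
  set K := Pᵀ * H⁻¹ * P
  have hK : K.IsSymm := by
    simp only [K, IsSymm, transpose_mul, transpose_transpose, transpose_nonsing_inv, hH.eq,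
      Matrix.mul_assoc]
  refine Nat.card_congr (Equiv.subtypeEquiv (Equiv.subRight K) fun B => ?_)
  rw [Equiv.subRight_apply, det_fromBlocks₁₁, invOf_eq_nonsing_inv]
  exact and_congr ⟨fun h => h.sub hK, fun h => by simpa using h.add hK⟩ (by simp [K, hdet])

lemma card_isSymm_det_border_ne_zero_of_ne_zero {a : F} (ha : a ≠ 0) (v : n → F) :
    Nat.card {B : Matrix n n F // B.IsSymm ∧ (border a v B).det ≠ 0} =
      nonsingSymmCount F n := by
  have hH : (of fun _ _ : Unit => a).det = a := det_unique _
  rw [← card_isSymm_det_fromBlocks_ne_zero (by ext; rfl) (hH ▸ ha) (replicateRow Unit v),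
    transpose_replicateRow]
  rfl

lemma det_border_zero_zero (B : Matrix n n F) : (border 0 0 B).det = 0 :=
  det_eq_zero_of_row_eq_zero (.inl ()) fun j => by cases j <;> rfl

lemma det_border_unit (a c b : F) :
    (border a (fun _ => c) (of fun _ _ : Unit => b)).det = a * b - c * c := by
  let e : Fin 2 ≃ Unit ⊕ Unit :=
    (finSumFinEquiv (m := 1) (n := 1)).symm.trans (.sumCongr (.ofUnique _ _) (.ofUnique _ _))
  rw [← det_submatrix_equiv_self e, det_fin_two]
  rfl

lemma card_isSymm_det_border_ne_zero_reindex (e : m ≃ n) (a : F) (v : n → F) :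
    Nat.card {B : Matrix n n F // B.IsSymm ∧ (border a v B).det ≠ 0} =
      Nat.card {B : Matrix m m F // B.IsSymm ∧ (border a (v ∘ e) B).det ≠ 0} := by
  rw [card_isSymm_reindex e]
  have h (B : Matrix m m F) : border a v (B.submatrix e.symm e.symm) =
      (border a (v ∘ e) B).submatrix (Equiv.sumCongr (.refl _) e.symm)
        (Equiv.sumCongr (.refl _) e.symm) := by
    ext (_ | i) (_ | j) <;> simp
  simp only [h, det_submatrix_equiv_self]

variable [Fintype F]

lemma card_isSymm_det_border_zero_of_inl_ne_zero {v : Unit ⊕ n → F} (hv : v (.inl ()) ≠ 0) :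
    Nat.card {B : Matrix (Unit ⊕ n) (Unit ⊕ n) F // B.IsSymm ∧ (border 0 v B).det ≠ 0} =
      Fintype.card F ^ (Fintype.card n + 1) * nonsingSymmCount F n := by
  have hblock (b : F) (w : n → F) (D : Matrix n n F) :
      (border 0 v (border b w D)).submatrix (Equiv.sumAssoc _ _ _) (Equiv.sumAssoc _ _ _) =
        fromBlocks (border 0 (fun _ => v (.inl ())) (of fun _ _ => b))
          (fromRows (replicateRow Unit (v ∘ .inr)) (replicateRow Unit w))
          (fromRows (replicateRow Unit (v ∘ .inr)) (replicateRow Unit w))ᵀ D := by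
    ext ((_ | _) | i) ((_ | _) | j) <;> rfl
  have hcount (b : F) (w : n → F) :
      Nat.card {D : Matrix n n F // D.IsSymm ∧ (border 0 v (border b w D)).det ≠ 0} =
        nonsingSymmCount F n := by
    simp only [← det_submatrix_equiv_self (Equiv.sumAssoc _ _ _) (border 0 v _), hblock]
    refine card_isSymm_det_fromBlocks_ne_zero (isSymm_border_iff.2 (by ext; rfl)) ?_ _
    simpa [det_border_unit] using hv
  rw [card_isSymm_eq_sum_border]
  simp only [hcount, Finset.sum_const, Finset.card_univ, Fintype.card_prod, Fintype.card_fun,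
    smul_eq_mul, pow_succ']

lemma card_isSymm_det_border_zero_of_ne_zero {v : Unit ⊕ n → F} (hv : v ≠ 0) :
    Nat.card {B : Matrix (Unit ⊕ n) (Unit ⊕ n) F // B.IsSymm ∧ (border 0 v B).det ≠ 0} =
      Fintype.card F ^ (Fintype.card n + 1) * nonsingSymmCount F n := by
  obtain ⟨j, hj⟩ := Function.ne_iff.1 hv
  rw [card_isSymm_det_border_ne_zero_reindex (Equiv.swap (.inl ()) j)]
  exact card_isSymm_det_border_zero_of_inl_ne_zero (by simpa using hj)

lemma sum_card_isSymm_det_border_zero :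
    ∑ v : Unit ⊕ n → F,
        Nat.card {B : Matrix (Unit ⊕ n) (Unit ⊕ n) F // B.IsSymm ∧ (border 0 v B).det ≠ 0} =
      (Fintype.card F ^ (Fintype.card n + 1) - 1) *
        (Fintype.card F ^ (Fintype.card n + 1) * nonsingSymmCount F n) := by
  classical
  rw [Fintype.sum_eq_add_sum_compl 0,
    Finset.sum_congr rfl fun v hv => card_isSymm_det_border_zero_of_ne_zero (by simpa using hv)]
  simp [det_border_zero_zero, Finset.card_compl, add_comm 1]

theorem nonsingSymmCount_unit_sum_unit_sum :
    nonsingSymmCount F (Unit ⊕ Unit ⊕ n) =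
      (Fintype.card F - 1) * Fintype.card F ^ (Fintype.card n + 1) *
          nonsingSymmCount F (Unit ⊕ n) +
        (Fintype.card F ^ (Fintype.card n + 1) - 1) * Fintype.card F ^ (Fintype.card n + 1) *
          nonsingSymmCount F n := by
  classical
  rw [nonsingSymmCount, card_isSymm_eq_sum_border, Fintype.sum_prod_type,
    Fintype.sum_eq_add_sum_compl 0, sum_card_isSymm_det_border_zero,
    Finset.sum_congr rfl fun a ha => Finset.sum_congr rfl fun v _ =>
      card_isSymm_det_border_ne_zero_of_ne_zero (by simpa using ha) v]
  simp [Finset.card_compl]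
  ring

end Matrix

lemma Nsym_eq_nonsingSymmCount (n m : ℕ) : Nsym n m = nonsingSymmCount (ZMod m) (Fin n) := rfl

lemma Nsym_add_two {p : ℕ} (hp : p.Prime) (k : ℕ) :
    Nsym (k + 2) p = (p - 1) * p ^ (k + 1) * Nsym (k + 1) p +
      (p ^ (k + 1) - 1) * p ^ (k + 1) * Nsym k p := by
  have := Fact.mk hp
  simp only [Nsym_eq_nonsingSymmCount]
  have e₁ : Fin (k + 1) ≃ Unit ⊕ Fin k := Fintype.equivOfCardEq (by simp [add_comm])
  have e₂ : Fin (k + 2) ≃ Unit ⊕ Unit ⊕ Fin k := Fintype.equivOfCardEq (by simp; omega)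
  rw [nonsingSymmCount_congr e₁, nonsingSymmCount_congr e₂, nonsingSymmCount_unit_sum_unit_sum,
    ZMod.card, Fintype.card_fin]

theorem Psym_three_term_recurrence_prime (p : ℕ) (hp : p.Prime) (q : ℝ)
    (hq : q = 1 / p) (n : ℕ) (hn : 2 ≤ n) :
    Psym n p = (1 - q) * Psym (n - 1) p + q * (1 - q ^ (n - 1)) * Psym (n - 2) p := by
  obtain ⟨k, rfl⟩ : ∃ k, n = k + 2 := ⟨n - 2, by omega⟩
  have hp0 : (p : ℝ) ≠ 0 := by exact_mod_cast hp.ne_zero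
  have htri (j : ℕ) : (j + 1) * (j + 1 + 1) / 2 = j * (j + 1) / 2 + (j + 1) := by
    rw [show (j + 1) * (j + 1 + 1) = j * (j + 1) + 2 * (j + 1) by ring,
      Nat.add_mul_div_left _ _ two_pos]
  have hrec := congrArg (Nat.cast (R := ℝ)) (Nsym_add_two hp k)
  push_cast [Nat.one_le_iff_ne_zero.2 hp.ne_zero, Nat.one_le_pow _ _ hp.pos] at hrec
  rw [show k + 2 - 1 = k + 1 from rfl, show k + 2 - 2 = k from rfl]
  simp only [Psym, htri, hrec, hq, div_pow, one_pow]
  field_simp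
  ring
end

section
/- Let p be a prime, q = 1/p, and let n ≥ 3 be an odd integer. Then P(n, p) = (1 − q^n)·P(n−2, p). -/
/-!
Let `N n` be the number of nonsingular symmetric `n × n` matrices over a field with `p` elements,
and sort those of size `n + 1` by their first column `(c, b)`. If `c ≠ 0`, the Schur complement
of `c` identifies the fibre with the matrices of size `n`, so each of the `(p - 1) p ^ n` such
columns contributes `N n`. The column `(0, 0)` contributes nothing, and a congruence by
`diag(1, g)` moves any `(0, b)` with `b ≠ 0` to `(0, e₁)`. There the upper left `2 × 2` block is
`[[0, 1], [1, t]]`, which is invertible, and its Schur complement shows that each of these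
`p ^ n - 1` columns contributes `p ^ n * N (n - 1)`. For the proportions this reads
`P (n + 1) = (1 - q) P n + q (1 - q ^ n) P (n - 1)`; induction on it gives `P (2k + 2) = P (2k + 1)`,
which turns it into `P (2k + 1) = (1 - q ^ (2k + 1)) P (2k - 1)`.
-/

open Matrix

theorem Matrix.IsSymm.fromBlocks_toBlocks {α ι κ : Type*} {A : Matrix (ι ⊕ κ) (ι ⊕ κ) α}
    (hA : A.IsSymm) :
    Matrix.fromBlocks A.toBlocks₁₁ A.toBlocks₂₁ᵀ A.toBlocks₂₁ A.toBlocks₂₂ = A := by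
  conv_rhs => rw [← Matrix.fromBlocks_toBlocks A]
  congr
  ext i j
  exact hA.apply (.inl j) (.inr i)

section MatrixLemmas

variable {α ι κ : Type*} [CommRing α] [Fintype ι]

theorem Matrix.IsSymm.transpose_mul_mul {A : Matrix ι ι α} (hA : A.IsSymm) (G : Matrix ι κ α) :
    (Gᵀ * A * G).IsSymm := by
  rw [IsSymm, transpose_mul, transpose_mul, transpose_transpose, hA.eq, Matrix.mul_assoc]

variable [DecidableEq ι]

theorem Matrix.IsSymm.mul_inv_mul_transpose {H : Matrix ι ι α} (hH : H.IsSymm)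
    (B : Matrix κ ι α) : (B * H⁻¹ * Bᵀ).IsSymm := by
  rw [IsSymm, transpose_mul, transpose_mul, transpose_transpose, transpose_nonsing_inv, hH.eq,
    Matrix.mul_assoc]

theorem Matrix.det_fromBlocks_transpose [Fintype κ] [DecidableEq κ] {H : Matrix ι ι α}
    (hH : IsUnit H.det) (B : Matrix κ ι α) (C : Matrix κ κ α) :
    (fromBlocks H Bᵀ B C).det = H.det * (C - B * H⁻¹ * Bᵀ).det := by
  have := H.invertibleOfIsUnitDet hH
  rw [det_fromBlocks₁₁, invOf_eq_nonsing_inv]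

theorem Matrix.IsSymm.det_eq_neg_one_of_hyperbolic {H : Matrix (Fin 2) (Fin 2) α}
    (hH : H.IsSymm) (h₀₀ : H 0 0 = 0) (h₁₀ : H 1 0 = 1) : H.det = -1 := by
  rw [det_fin_two, h₀₀, ← hH.apply 0 1, h₁₀]
  ring

def Matrix.congruence (G : (Matrix ι ι α)ˣ) : Matrix ι ι α ≃ Matrix ι ι α where
  toFun A := (G : Matrix ι ι α)ᵀ * A * G
  invFun A := (↑G⁻¹ : Matrix ι ι α)ᵀ * A * ↑G⁻¹
  left_inv A := by
    simp only [← Matrix.mul_assoc, ← transpose_mul, Units.mul_inv, transpose_one, one_mul]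
    simp [Matrix.mul_assoc]
  right_inv A := by
    simp only [← Matrix.mul_assoc, ← transpose_mul, Units.inv_mul, transpose_one, one_mul]
    simp [Matrix.mul_assoc]

end MatrixLemmas

theorem exists_linearEquiv_apply_eq {K V : Type*} [DivisionRing K] [AddCommGroup V] [Module K V]
    {x y : V} (hx : x ≠ 0) (hy : y ≠ 0) : ∃ f : V ≃ₗ[K] V, f x = y := by
  obtain ⟨f, hf⟩ := Submodule.exists_linearEquiv_restrict_eq
    ((LinearEquiv.toSpanNonzeroSingleton K V x hx).symm.trans
      (LinearEquiv.toSpanNonzeroSingleton K V y hy))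
  have := hf (LinearEquiv.toSpanNonzeroSingleton K V x hx 1)
  rw [LinearEquiv.trans_apply, LinearEquiv.symm_apply_apply,
    LinearEquiv.toSpanNonzeroSingleton_one, LinearEquiv.toSpanNonzeroSingleton_one] at this
  exact ⟨f, this.symm⟩

theorem Matrix.exists_isUnit_mul_eq {K κ : Type*} [Field K] [Fintype κ] [DecidableEq κ]
    {B C : Matrix κ (Fin 1) K} (hB : B ≠ 0) (hC : C ≠ 0) :
    ∃ g : Matrix κ κ K, IsUnit g ∧ g * B = C := by
  have hcol (M : Matrix κ (Fin 1) K) : replicateCol (Fin 1) (Mᵀ 0) = M := by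
    ext i j
    rw [Fin.fin_one_eq_zero j]
    rfl
  obtain ⟨f, hf⟩ := exists_linearEquiv_apply_eq (K := K) (x := Bᵀ 0) (y := Cᵀ 0)
    (fun h => hB (by rw [← hcol B, h]; rfl)) (fun h => hC (by rw [← hcol C, h]; rfl))
  refine ⟨LinearMap.toMatrix' f, ?_, ?_⟩
  · rw [isUnit_iff_isUnit_det, LinearMap.det_toMatrix']
    exact f.isUnit_det'
  · rw [← hcol B, ← replicateCol_mulVec, LinearMap.toMatrix'_mulVec]
    simp [hf, hcol]

theorem Fintype.card_matrix (m n α : Type*) [Fintype m] [DecidableEq m] [Fintype n]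
    [DecidableEq n] [Fintype α] :
    Fintype.card (Matrix m n α) = Fintype.card α ^ (Fintype.card m * Fintype.card n) := by
  rw [Fintype.card_congr Matrix.of.symm]
  simp [← pow_mul, mul_comm]

theorem card_subtype_eq_sum_card_fiberwise {α β : Type*} [Finite α] [Fintype β] (P : α → Prop)
    (f : α → β) : Nat.card {a // P a} = ∑ b, Nat.card {a // P a ∧ f a = b} := by
  rw [← Nat.card_sigma]
  exact Nat.card_congr ((Equiv.sigmaFiberEquiv fun a : {a // P a} => f a).symm.trans
    (Equiv.sigmaCongrRight fun b => Equiv.subtypeSubtypeEquivSubtypeInter P (f · = b)))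

noncomputable def nonsingSymmCard (K ι : Type*) [Field K] [Fintype ι] [DecidableEq ι] : ℕ :=
  Nat.card {A : Matrix ι ι K // A.IsSymm ∧ A.det ≠ 0}

section Counting

variable {K ι κ : Type*} [Field K] [Fintype ι] [DecidableEq ι] [Fintype κ] [DecidableEq κ]

noncomputable def nonsingSymmFiberCard (H : Matrix ι ι K) (B : Matrix κ ι K) : ℕ :=
  Nat.card {A : Matrix (ι ⊕ κ) (ι ⊕ κ) K //
    (A.IsSymm ∧ A.det ≠ 0) ∧ A.toBlocks₁₁ = H ∧ A.toBlocks₂₁ = B}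

theorem nonsingSymmCard_congr (e : ι ≃ κ) : nonsingSymmCard K ι = nonsingSymmCard K κ :=
  Nat.card_congr <| (reindex e e).subtypeEquiv fun A => by
    rw [det_reindex_self, isSymm_reindex_iff]

theorem card_nonsingSymm_toBlocks (P : Matrix ι ι K → Prop) (Q : Matrix κ ι K → Prop)
    (hP : ∀ H, P H → H.IsSymm ∧ H.det ≠ 0) :
    Nat.card {A : Matrix (ι ⊕ κ) (ι ⊕ κ) K //
        (A.IsSymm ∧ A.det ≠ 0) ∧ P A.toBlocks₁₁ ∧ Q A.toBlocks₂₁}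
      = Nat.card {H // P H} * Nat.card {B // Q B} * nonsingSymmCard K κ := by
  rw [nonsingSymmCard, ← Nat.card_prod, ← Nat.card_prod]
  refine Nat.card_congr
    { toFun := fun A => ⟨⟨⟨_, A.2.2.1⟩, ⟨_, A.2.2.2⟩⟩,
        ⟨A.1.toBlocks₂₂ - A.1.toBlocks₂₁ * A.1.toBlocks₁₁⁻¹ * A.1.toBlocks₂₁ᵀ, ?_⟩⟩
      invFun := fun X => ⟨fromBlocks X.1.1 X.1.2.1ᵀ X.1.2
          (X.2.1 + X.1.2.1 * X.1.1.1⁻¹ * X.1.2.1ᵀ), ?_⟩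
      left_inv := fun A => ?_
      right_inv := fun X => ?_ }
  · obtain ⟨A, ⟨hA, hdet⟩, hH, -⟩ := A
    obtain ⟨hHs, hHd⟩ := hP _ hH
    rw [← hA.fromBlocks_toBlocks, det_fromBlocks_transpose hHd.isUnit] at hdet
    exact ⟨(hA.submatrix Sum.inr).sub (hHs.mul_inv_mul_transpose _), right_ne_zero_of_mul hdet⟩
  · obtain ⟨⟨⟨H, hH⟩, ⟨B, -⟩⟩, ⟨D, hDs, hDd⟩⟩ := X
    obtain ⟨hHs, hHd⟩ := hP H hH
    refine ⟨⟨hHs.fromBlocks (transpose_transpose B) (hDs.add (hHs.mul_inv_mul_transpose B)), ?_⟩,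
      by simpa using hH, by simpa⟩
    rw [det_fromBlocks_transpose hHd.isUnit, add_sub_cancel_right]
    exact mul_ne_zero hHd hDd
  · obtain ⟨A, ⟨hA, -⟩, -⟩ := A
    ext1
    simp [hA.fromBlocks_toBlocks]
  · ext <;> simp

theorem card_nonsingSymm_transpose_mul_mul {G : Matrix ι ι K} (hG : IsUnit G)
    (P : Matrix ι ι K → Prop) :
    Nat.card {A // (A.IsSymm ∧ A.det ≠ 0) ∧ P (Gᵀ * A * G)}
      = Nat.card {A // (A.IsSymm ∧ A.det ≠ 0) ∧ P A} := by
  obtain ⟨G, rfl⟩ := hG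
  have hdet : (G : Matrix ι ι K).det ≠ 0 := (G.isUnit.map detMonoidHom).ne_zero
  refine Nat.card_congr (Equiv.subtypeEquiv (congruence G) fun A => and_congr_left' ?_)
  have hsymm : ((G : Matrix ι ι K)ᵀ * A * G).IsSymm → A.IsSymm := fun h => by
    convert h.transpose_mul_mul (↑G⁻¹ : Matrix ι ι K)
    exact ((congruence G).left_inv A).symm
  change _ ↔ ((G : Matrix ι ι K)ᵀ * A * G).IsSymm ∧ ((G : Matrix ι ι K)ᵀ * A * G).det ≠ 0
  rw [det_mul, det_mul, det_transpose]
  exact and_congr ⟨fun h => h.transpose_mul_mul _, hsymm⟩ (by simp [hdet])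

theorem nonsingSymmFiberCard_mul {g : Matrix κ κ K} (hg : IsUnit g) (H : Matrix ι ι K)
    (B : Matrix κ ι K) : nonsingSymmFiberCard H (g * B) = nonsingSymmFiberCard H B := by
  set G : Matrix (ι ⊕ κ) (ι ⊕ κ) K := fromBlocks 1 0 0 gᵀ
  have hG : IsUnit G := by
    rwa [isUnit_iff_isUnit_det, det_fromBlocks_zero₂₁, det_one, one_mul, det_transpose,
      ← isUnit_iff_isUnit_det]
  have hblocks (A : Matrix (ι ⊕ κ) (ι ⊕ κ) K) :
      (Gᵀ * A * G).toBlocks₁₁ = A.toBlocks₁₁ ∧ (Gᵀ * A * G).toBlocks₂₁ = g * A.toBlocks₂₁ := by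
    rw [← fromBlocks_toBlocks A]
    simp [G, fromBlocks_transpose, fromBlocks_multiply]
  rw [nonsingSymmFiberCard, ← card_nonsingSymm_transpose_mul_mul hG]
  refine Nat.card_congr (Equiv.subtypeEquivRight fun A => and_congr_right' ?_)
  have := hg.invertible
  rw [(hblocks A).1, (hblocks A).2, Matrix.mul_right_inj_of_invertible]

theorem nonsingSymmFiberCard_zero_zero [Nonempty ι] :
    nonsingSymmFiberCard (0 : Matrix ι ι K) (0 : Matrix κ ι K) = 0 := by
  refine Nat.card_eq_zero.mpr (.inl ⟨fun ⟨A, ⟨_, hdet⟩, h₁₁, h₂₁⟩ => hdet ?_⟩)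
  obtain ⟨i₀⟩ := ‹Nonempty ι›
  refine det_eq_zero_of_column_eq_zero (.inl i₀) ?_
  rintro (i | k)
  · exact congr($h₁₁ i i₀)
  · exact congr($h₂₁ k i₀)

variable [Fintype K]

theorem card_hyperbolic_fin_two :
    Nat.card {H : Matrix (Fin 2) (Fin 2) K // H.IsSymm ∧ H 0 0 = 0 ∧ H 1 0 = 1}
      = Fintype.card K := by
  rw [← Nat.card_eq_fintype_card]
  refine Nat.card_congr
    { toFun := fun H => H.1 1 1
      invFun := fun t => ⟨!![0, 1; 1, t],
        IsSymm.ext fun i j => by fin_cases i <;> fin_cases j <;> rfl, rfl, rfl⟩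
      left_inv := fun ⟨H, hs, h₀₀, h₁₀⟩ => ?_
      right_inv := fun t => rfl }
  have h₀₁ : H 0 1 = 1 := (hs.apply 0 1).symm.trans h₁₀
  ext i j
  fin_cases i <;> fin_cases j <;> simp [h₀₀, h₀₁, h₁₀]

theorem card_matrix_fin_two_col_zero :
    Nat.card {B : Matrix κ (Fin 2) K // ∀ j, B j 0 = 0} = Fintype.card K ^ Fintype.card κ := by
  rw [← Fintype.card_fun, ← Nat.card_eq_fintype_card]
  refine Nat.card_congr
    { toFun := fun B j => B.1 j 1
      invFun := fun d => ⟨of fun j => ![0, d j], fun j => rfl⟩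
      left_inv := fun ⟨B, hB⟩ => ?_
      right_inv := fun d => rfl }
  ext j i
  fin_cases i <;> simp [hB]

theorem nonsingSymmFiberCard_zero_single :
    nonsingSymmFiberCard (0 : Matrix (Fin 1) (Fin 1) K)
        (single (.inl 0) 0 1 : Matrix (Fin 1 ⊕ κ) (Fin 1) K)
      = Fintype.card K ^ (Fintype.card κ + 1) * nonsingSymmCard K κ := by
  let e : Fin 1 ⊕ (Fin 1 ⊕ κ) ≃ Fin 2 ⊕ κ :=
    (Equiv.sumAssoc _ _ _).symm.trans (Equiv.sumCongr finSumFinEquiv (Equiv.refl κ))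
  have he₀ : e.symm (.inl 0) = .inl 0 := rfl
  have he₁ : e.symm (.inl 1) = .inr (.inl 0) := rfl
  have he (j : κ) : e.symm (.inr j) = .inr (.inr j) := rfl
  have hcard := card_nonsingSymm_toBlocks (κ := κ)
    (fun H : Matrix (Fin 2) (Fin 2) K => H.IsSymm ∧ H 0 0 = 0 ∧ H 1 0 = 1)
    (fun B => ∀ j, B j 0 = 0)
    fun H ⟨hs, h₀₀, h₁₀⟩ => ⟨hs, by simp [hs.det_eq_neg_one_of_hyperbolic h₀₀ h₁₀]⟩
  rw [card_hyperbolic_fin_two, card_matrix_fin_two_col_zero, ← pow_succ'] at hcard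
  rw [← hcard, nonsingSymmFiberCard]
  refine Nat.card_congr ((reindex e e).subtypeEquiv fun A => ?_)
  rw [det_reindex_self, isSymm_reindex_iff]
  refine and_congr_right fun ⟨hA, _⟩ => ?_
  have hs : (reindex e e A).toBlocks₁₁.IsSymm := (hA.reindex e).submatrix Sum.inl
  simp only [hs, true_and, and_assoc]
  simp only [← Matrix.ext_iff, Fin.forall_fin_one, Sum.forall, toBlocks₁₁,
    toBlocks₂₁, of_apply, reindex_apply, submatrix_apply, he₀, he₁, he]
  simp

end Counting

section Recurrence

variable {K σ κ : Type*} [Field K] [Fintype K] [Fintype σ] [DecidableEq σ] [Fintype κ]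
  [DecidableEq κ]

theorem nonsingSymmCard_fin_one_sum :
    nonsingSymmCard K (Fin 1 ⊕ σ)
      = (Fintype.card K - 1) * Fintype.card K ^ Fintype.card σ * nonsingSymmCard K σ
        + ∑ B : Matrix σ (Fin 1) K, nonsingSymmFiberCard (0 : Matrix (Fin 1) (Fin 1) K) B := by
  classical
  have hfiber (H : Matrix (Fin 1) (Fin 1) K) (hH : H ≠ 0) (B : Matrix σ (Fin 1) K) :
      nonsingSymmFiberCard H B = nonsingSymmCard K σ := by
    have hdet : H.det ≠ 0 := by
      rw [det_unique]
      exact fun h => hH (by ext i j; simpa [Subsingleton.elim i default, Subsingleton.elim j default])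
    have := card_nonsingSymm_toBlocks (· = H) (· = B) fun H' h => h ▸ ⟨.ext fun i j => by
      simp [Subsingleton.elim i j], hdet⟩
    rw [nonsingSymmFiberCard, this]
    simp
  rw [nonsingSymmCard, card_subtype_eq_sum_card_fiberwise _ fun A => (A.toBlocks₁₁, A.toBlocks₂₁),
    Fintype.sum_prod_type, Fintype.sum_eq_add_sum_compl 0, add_comm]
  simp only [Prod.mk.injEq]
  congr 1
  change ∑ H ∈ {0}ᶜ, ∑ B, nonsingSymmFiberCard H B = _
  rw [Finset.sum_congr rfl fun H hH => Finset.sum_congr rfl fun B _ =>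
    hfiber H (Finset.mem_compl.mp hH <| Finset.mem_singleton.mpr ·) B]
  simp [Finset.card_compl, Fintype.card_matrix, mul_assoc]

theorem sum_nonsingSymmFiberCard_zero :
    ∑ B : Matrix (Fin 1 ⊕ κ) (Fin 1) K, nonsingSymmFiberCard (0 : Matrix (Fin 1) (Fin 1) K) B
      = (Fintype.card K ^ (Fintype.card κ + 1) - 1)
        * (Fintype.card K ^ (Fintype.card κ + 1) * nonsingSymmCard K κ) := by
  classical
  set B₀ : Matrix (Fin 1 ⊕ κ) (Fin 1) K := single (.inl 0) 0 1
  have hB₀ : B₀ ≠ 0 := fun h => one_ne_zero congr($h (.inl 0) 0)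
  have hfiber (B : Matrix (Fin 1 ⊕ κ) (Fin 1) K) (hB : B ≠ 0) :
      nonsingSymmFiberCard (0 : Matrix (Fin 1) (Fin 1) K) B
        = Fintype.card K ^ (Fintype.card κ + 1) * nonsingSymmCard K κ := by
    obtain ⟨g, hg, rfl⟩ := exists_isUnit_mul_eq hB₀ hB
    rw [nonsingSymmFiberCard_mul hg, nonsingSymmFiberCard_zero_single]
  rw [Fintype.sum_eq_add_sum_compl 0, nonsingSymmFiberCard_zero_zero, zero_add,
    Finset.sum_congr rfl fun B hB => hfiber B (Finset.mem_compl.mp hB <| Finset.mem_singleton.mpr ·)]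
  simp [Finset.card_compl, Fintype.card_matrix, add_comm]

theorem nonsingSymmCard_fin_succ (n : ℕ) :
    nonsingSymmCard K (Fin (n + 1))
      = (Fintype.card K - 1) * Fintype.card K ^ n * nonsingSymmCard K (Fin n)
        + (Fintype.card K ^ n - 1) * (Fintype.card K ^ n * nonsingSymmCard K (Fin (n - 1))) := by
  have hfin (m : ℕ) : Fin 1 ⊕ Fin m ≃ Fin (m + 1) := finSumFinEquiv.trans (finCongr (add_comm 1 m))
  cases n with
  | zero =>
    rw [← nonsingSymmCard_congr (hfin 0), nonsingSymmCard_fin_one_sum,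
      Fintype.sum_eq_single 0 fun B hB => absurd (Subsingleton.elim B 0) hB,
      nonsingSymmFiberCard_zero_zero]
    simp
  | succ m =>
    rw [← nonsingSymmCard_congr ((Equiv.sumCongr (.refl _) (hfin m)).trans (hfin (m + 1))),
      nonsingSymmCard_fin_one_sum, sum_nonsingSymmFiberCard_zero, nonsingSymmCard_congr (hfin m)]
    simp [add_comm 1 m]

end Recurrence

theorem triangle_add_one (n : ℕ) : (n + 1) * (n + 1 + 1) / 2 = n * (n + 1) / 2 + (n + 1) := by
  rw [← Nat.add_mul_div_left _ _ two_pos]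
  ring_nf

theorem Psym_succ {p : ℕ} (hp : p.Prime) (n : ℕ) :
    Psym (n + 1) p = (1 - 1 / p) * Psym n p + 1 / p * (1 - (1 / p : ℝ) ^ n) * Psym (n - 1) p := by
  have := Fact.mk hp
  have hN : Nsym (n + 1) p
      = (p - 1) * p ^ n * Nsym n p + (p ^ n - 1) * (p ^ n * Nsym (n - 1) p) := by
    have := nonsingSymmCard_fin_succ (K := ZMod p) n
    rwa [ZMod.card] at this
  have hT : n * (n + 1) / 2 = (n - 1) * (n - 1 + 1) / 2 + n := by
    cases n with
    | zero => rfl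
    | succ m => exact triangle_add_one m
  have hp0 : (p : ℝ) ≠ 0 := by exact_mod_cast hp.ne_zero
  unfold Psym
  rw [triangle_add_one, hT, hN, one_div, inv_pow]
  push_cast [Nat.cast_sub hp.one_le, Nat.cast_sub (Nat.one_le_pow n p hp.pos)]
  field_simp
  ring

section Sequence

variable {x : ℕ → ℝ} {q : ℝ}

theorem even_eq_pred_of_recurrence
    (h : ∀ n, x (n + 1) = (1 - q) * x n + q * (1 - q ^ n) * x (n - 1)) (k : ℕ) :
    x (2 * k + 2) = x (2 * k + 1) := by
  induction k with
  | zero =>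
    have h₀ : x 1 = (1 - q) * x 0 + q * (1 - q ^ 0) * x 0 := h 0
    have h₁ : x 2 = (1 - q) * x 1 + q * (1 - q ^ 1) * x 0 := h 1
    linear_combination h₁ - q * h₀
  | succ k ih =>
    have h₁ : x (2 * k + 3) = (1 - q) * x (2 * k + 2) + q * (1 - q ^ (2 * k + 2)) * x (2 * k + 1) :=
      h (2 * k + 2)
    have h₂ : x (2 * k + 4) = (1 - q) * x (2 * k + 3) + q * (1 - q ^ (2 * k + 3)) * x (2 * k + 2) :=
      h (2 * k + 3)
    linear_combination h₂ - q * h₁ + q ^ 2 * (1 - q ^ (2 * k + 2)) * ih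

theorem odd_eq_of_recurrence
    (h : ∀ n, x (n + 1) = (1 - q) * x n + q * (1 - q ^ n) * x (n - 1)) (k : ℕ) :
    x (2 * k + 1) = (1 - q ^ (2 * k + 1)) * x (2 * k - 1) := by
  cases k with
  | zero => simpa using h 0
  | succ k =>
    have h₁ : x (2 * k + 3) = (1 - q) * x (2 * k + 2) + q * (1 - q ^ (2 * k + 2)) * x (2 * k + 1) :=
      h (2 * k + 2)
    show x (2 * k + 3) = (1 - q ^ (2 * k + 3)) * x (2 * k + 1)
    linear_combination h₁ + (1 - q) * even_eq_pred_of_recurrence h k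

end Sequence

theorem Psym_odd_recurrence_prime_general (p : ℕ) (hp : p.Prime) (q : ℝ)
    (hq : q = 1 / p) (n : ℕ) (hodd : Odd n) :
    Psym n p = (1 - q ^ n) * Psym (n - 2) p := by
  obtain ⟨k, rfl⟩ := hodd
  rw [hq, show 2 * k + 1 - 2 = 2 * k - 1 by omega]
  exact odd_eq_of_recurrence (x := (Psym · p)) (Psym_succ hp) k

theorem Psym_odd_recurrence_prime (p : ℕ) (hp : p.Prime) (q : ℝ)
    (hq : q = 1 / p) (n : ℕ) (hn : 3 ≤ n) (hodd : Odd n) :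
    Psym n p = (1 - q ^ n) * Psym (n - 2) p :=
  Psym_odd_recurrence_prime_general p hp q hq n hodd
end

section
/- Let q be a real number with 0 < q < 1 and let k ≥ 0 and s ≥ 0 be integers. Then T_1(k,s) = (Π_k(q²)/Π_{2k}(q)) · (1 − q^{s+1} · ∑_{j=0}^{k−1} q^{2j} · Π_{2j}(q)·Π_{j+s}(q²) / (Π_j(q²)² · Π_s(q²))). -/
/-- `Π_n(t) = ∏_{j=1}^n (1 - t^j)`. -/
noncomputable def PiProd (n : ℕ) (t : ℝ) : ℝ :=
  ∏ j ∈ Finset.range n, (1 - t ^ (j + 1))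

/-- `T_β(k,s)`: equal to `1` if `k = 0`, and to
`∑_{j=0}^{s} q^{βj} · Π_{k+j−1}(q²) / (Π_j(q²) · Π_{k−1}(q²))` if `k ≥ 1`. -/
noncomputable def T (q : ℝ) (β k s : ℕ) : ℝ :=
  if k = 0 then 1
  else ∑ j ∈ Finset.range (s + 1),
    q ^ (β * j) * PiProd (k + j - 1) (q ^ 2) / (PiProd j (q ^ 2) * PiProd (k - 1) (q ^ 2))

/-! Write `S_k(s)` for the sum over `j < k` in the statement and `C_k = Π_k(q²) / Π_{2k}(q)`.
Two sums telescoping in `k` give `1 - q S_k(0) = 1 / C_k` and a closed form of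
`S_k(s) - q S_k(s+1)`, in which `C_k q^{s+1} (S_k(s) - q S_k(s+1))` is visibly the `(s+1)`-st
term of `T_1(k,s)`; the identity then follows by induction on `s`. -/

open Finset

namespace PiProd

@[simp] lemma zero (t : ℝ) : PiProd 0 t = 1 := prod_range_zero _

lemma succ (n : ℕ) (t : ℝ) : PiProd (n + 1) t = PiProd n t * (1 - t ^ (n + 1)) :=
  prod_range_succ _ _

lemma ne_zero {t : ℝ} (ht : ∀ n, t ^ (n + 1) ≠ 1) (n : ℕ) : PiProd n t ≠ 0 :=
  prod_ne_zero_iff.2 fun j _ => sub_ne_zero.2 (ht j).symm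

end PiProd

lemma sq_pow_succ_ne_one {q : ℝ} (hq : ∀ n, q ^ (n + 1) ≠ 1) (n : ℕ) : (q ^ 2) ^ (n + 1) ≠ 1 := by
  rw [← pow_mul, show 2 * (n + 1) = 2 * n + 1 + 1 by ring]
  exact hq _

lemma pow_succ_ne_one_of_mem_Ioo {q : ℝ} (hq : q ∈ Set.Ioo 0 1) (n : ℕ) : q ^ (n + 1) ≠ 1 :=
  (pow_lt_one₀ hq.1.le hq.2 n.succ_ne_zero).ne

/-- `S_k(s)`, the sum in the statement of `T_one_identity`. -/
noncomputable def correctionSum (q : ℝ) (k s : ℕ) : ℝ :=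
  ∑ j ∈ range k, q ^ (2 * j) * PiProd (2 * j) q * PiProd (j + s) (q ^ 2) /
    (PiProd j (q ^ 2) ^ 2 * PiProd s (q ^ 2))

section

variable {q : ℝ} (hq : ∀ n, q ^ (n + 1) ≠ 1)
include hq

lemma one_sub_mul_correctionSum_zero (k : ℕ) :
    1 - q * correctionSum q k 0 = PiProd (2 * k) q / PiProd k (q ^ 2) := by
  have hq2 := sq_pow_succ_ne_one hq
  induction k with
  | zero => simp [correctionSum]
  | succ k ih =>
    have := PiProd.ne_zero hq2 k
    have := sub_ne_zero.2 (hq2 k).symm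
    rw [correctionSum, sum_range_succ, mul_add, ← sub_sub, ← correctionSum, ih,
      show 2 * (k + 1) = 2 * k + 1 + 1 by ring, PiProd.succ, PiProd.succ, PiProd.succ,
      add_zero, PiProd.zero]
    field_simp
    ring

lemma correctionSum_sub_mul_correctionSum_succ (k s : ℕ) :
    correctionSum q k s - q * correctionSum q k (s + 1) =
      PiProd (2 * k) q * PiProd (k + s) (q ^ 2) * (1 - (q ^ 2) ^ k) /
        (PiProd k (q ^ 2) ^ 2 * PiProd (s + 1) (q ^ 2)) := by
  have hq2 := sq_pow_succ_ne_one hq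
  induction k with
  | zero => simp [correctionSum]
  | succ k ih =>
    have := PiProd.ne_zero hq2 k
    have := PiProd.ne_zero hq2 s
    have := sub_ne_zero.2 (hq2 k).symm
    have := sub_ne_zero.2 (hq2 s).symm
    rw [correctionSum, correctionSum, sum_range_succ, sum_range_succ, mul_add,
      add_sub_add_comm, ← correctionSum, ← correctionSum, ih,
      show 2 * (k + 1) = 2 * k + 1 + 1 by ring, show k + 1 + s = k + s + 1 by ring,
      show k + (s + 1) = k + s + 1 by ring, PiProd.succ (2 * k + 1), PiProd.succ (2 * k),
      PiProd.succ (k + s), PiProd.succ k, PiProd.succ s]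
    field_simp
    ring

lemma sum_pow_mul_qBinomial_eq (K s : ℕ) :
    ∑ j ∈ range (s + 1), q ^ j * PiProd (K + j) (q ^ 2) / (PiProd j (q ^ 2) * PiProd K (q ^ 2)) =
      PiProd (K + 1) (q ^ 2) / PiProd (2 * (K + 1)) q *
        (1 - q ^ (s + 1) * correctionSum q (K + 1) s) := by
  have hq2 := sq_pow_succ_ne_one hq
  have := PiProd.ne_zero hq2 (K + 1)
  have := PiProd.ne_zero hq (2 * (K + 1))
  have := PiProd.ne_zero hq2 K
  induction s with
  | zero =>
    rw [zero_add, pow_one, one_sub_mul_correctionSum_zero hq]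
    simp [*]
  | succ s ih =>
    have := PiProd.ne_zero hq2 (s + 1)
    have := sub_ne_zero.2 (hq2 K).symm
    rw [sum_range_succ, ih, show 1 - q ^ (s + 1 + 1) * correctionSum q (K + 1) (s + 1) =
        1 - q ^ (s + 1) * correctionSum q (K + 1) s + q ^ (s + 1) *
          (correctionSum q (K + 1) s - q * correctionSum q (K + 1) (s + 1)) by ring,
      correctionSum_sub_mul_correctionSum_succ hq, add_right_comm, ← add_assoc, PiProd.succ K]
    field_simp

end

theorem T_one_identity (q : ℝ) (hq0 : 0 < q) (hq1 : q < 1) (k s : ℕ) :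
    T q 1 k s =
      (PiProd k (q ^ 2) / PiProd (2 * k) q) *
        (1 - q ^ (s + 1) * ∑ j ∈ Finset.range k,
          q ^ (2 * j) * PiProd (2 * j) q * PiProd (j + s) (q ^ 2) /
            (PiProd j (q ^ 2) ^ 2 * PiProd s (q ^ 2))) := by
  rcases k with _ | K
  · simp [T]
  · rw [← correctionSum, ← sum_pow_mul_qBinomial_eq (pow_succ_ne_one_of_mem_Ioo ⟨hq0, hq1⟩) K s,
      T, if_neg K.succ_ne_zero]
    refine sum_congr rfl fun j _ => ?_
    rw [Nat.add_sub_cancel, show K + 1 + j - 1 = K + j by omega, one_mul]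
end

section
/- Let q be a real number with 0 < q < 1 and let k ≥ 0 and s ≥ 0 be integers. Then T_3(k,s) = (Π_k(q²)/Π_{2k+1}(q)) · (1 − q − q^{3s+3} · ∑_{j=0}^{k−1} q^{2j} · Π_{2j+1}(q)·Π_{j+s}(q²) / (Π_j(q²)² · Π_s(q²))). -/
/-!
For `k ≥ 1` both sides are compared by induction on `s`. Writing `a_j(s)` for the `j`-th summand
on the right, the case `s = 0` is the telescoping identity
`1 - q - q³ ∑_{j<k} a_j(0) = Π_{2k+1}(q) / Π_k(q²)`, and the increment of `T_3(k, ·)` from `s` to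
`s + 1` is matched by the telescoping identity
`∑_{j<k} (a_j(s) - q³ a_j(s+1)) = (1 - q^{2k}) Π_{2k+1}(q) Π_{k+s}(q²) / (Π_k(q²)² Π_{s+1}(q²))`.
Each telescoping step is a rational identity in `q` once the products are peeled off.
-/

open Finset

@[simp]
theorem PiProd_zero (t : ℝ) : PiProd 0 t = 1 := prod_range_zero _

theorem PiProd_succ (n : ℕ) (t : ℝ) : PiProd (n + 1) t = PiProd n t * (1 - t ^ (n + 1)) :=
  prod_range_succ _ _

theorem one_sub_pow_succ_ne_zero {t : ℝ} (ht : |t| < 1) (n : ℕ) : 1 - t ^ (n + 1) ≠ 0 := by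
  have : |t ^ (n + 1)| < 1 := by
    rw [abs_pow]
    exact pow_lt_one₀ (abs_nonneg t) ht n.succ_ne_zero
  exact sub_ne_zero.mpr fun h => (abs_lt.mp this).2.ne h.symm

theorem PiProd_ne_zero {t : ℝ} (ht : |t| < 1) (n : ℕ) : PiProd n t ≠ 0 :=
  prod_ne_zero_iff.mpr fun j _ => one_sub_pow_succ_ne_zero ht j

theorem T_succ_zero (q : ℝ) (β m : ℕ) (hm : PiProd m (q ^ 2) ≠ 0) : T q β (m + 1) 0 = 1 := by
  simp [T, hm]

theorem T_succ_succ (q : ℝ) (β m s : ℕ) :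
    T q β (m + 1) (s + 1) = T q β (m + 1) s +
      q ^ (β * (s + 1)) * PiProd (m + 1 + s) (q ^ 2) /
        (PiProd (s + 1) (q ^ 2) * PiProd m (q ^ 2)) := by
  simp only [T, Nat.add_one_ne_zero, if_false, sum_range_succ (n := s + 1), Nat.add_sub_cancel]
  rw [show m + 1 + (s + 1) - 1 = m + 1 + s by omega]

noncomputable def T3Term (q : ℝ) (s j : ℕ) : ℝ :=
  q ^ (2 * j) * PiProd (2 * j + 1) q * PiProd (j + s) (q ^ 2) /
    (PiProd j (q ^ 2) ^ 2 * PiProd s (q ^ 2))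

section

variable {q : ℝ}

theorem abs_sq_lt_one (hq : |q| < 1) : |q ^ 2| < 1 := by
  rw [abs_pow]
  exact pow_lt_one₀ (abs_nonneg q) hq two_ne_zero

theorem PiProd_odd_div_succ (hq : |q| < 1) (n : ℕ) :
    PiProd (2 * (n + 1) + 1) q / PiProd (n + 1) (q ^ 2) =
      PiProd (2 * n + 1) q / PiProd n (q ^ 2) - q ^ 3 * T3Term q 0 n := by
  have ha := abs_sq_lt_one hq
  rw [T3Term, show 2 * (n + 1) + 1 = 2 * n + 1 + 1 + 1 by ring, PiProd_succ (2 * n + 1 + 1),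
    PiProd_succ (2 * n + 1), PiProd_succ n, add_zero, PiProd_zero]
  have := PiProd_ne_zero ha n
  have := one_sub_pow_succ_ne_zero ha n
  field_simp
  ring

theorem one_sub_sub_sum_T3Term_zero (hq : |q| < 1) (n : ℕ) :
    1 - q - q ^ 3 * ∑ j ∈ range n, T3Term q 0 j = PiProd (2 * n + 1) q / PiProd n (q ^ 2) := by
  induction n with
  | zero => simp [PiProd_succ]
  | succ n ih => rw [PiProd_odd_div_succ hq, ← ih, sum_range_succ]; ring

/-- The factor `1 - (q²)^k` makes the right side vanish at `k = 0`, so the telescoping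
starts there. -/
theorem sum_T3Term_sub_sum_T3Term_succ (hq : |q| < 1) (s k : ℕ) :
    ∑ j ∈ range k, (T3Term q s j - q ^ 3 * T3Term q (s + 1) j) =
      (1 - (q ^ 2) ^ k) * PiProd (2 * k + 1) q * PiProd (k + s) (q ^ 2) /
        (PiProd k (q ^ 2) ^ 2 * PiProd (s + 1) (q ^ 2)) := by
  have ha := abs_sq_lt_one hq
  induction k with
  | zero => simp
  | succ k ih =>
    rw [sum_range_succ, ih, T3Term, T3Term, show 2 * (k + 1) + 1 = 2 * k + 1 + 1 + 1 by ring,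
      show k + 1 + s = k + s + 1 by ring, show k + (s + 1) = k + s + 1 by ring,
      PiProd_succ (2 * k + 1 + 1), PiProd_succ (2 * k + 1), PiProd_succ (k + s), PiProd_succ k,
      PiProd_succ s]
    have := PiProd_ne_zero ha k
    have := PiProd_ne_zero ha s
    have := one_sub_pow_succ_ne_zero ha k
    have := one_sub_pow_succ_ne_zero ha s
    field_simp
    ring

theorem PiProd_div_mul_sum_T3Term_sub (hq : |q| < 1) (m s : ℕ) :
    PiProd (m + 1) (q ^ 2) / PiProd (2 * (m + 1) + 1) q *
        (∑ j ∈ range (m + 1), T3Term q s j - q ^ 3 * ∑ j ∈ range (m + 1), T3Term q (s + 1) j) =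
      PiProd (m + 1 + s) (q ^ 2) / (PiProd (s + 1) (q ^ 2) * PiProd m (q ^ 2)) := by
  have ha := abs_sq_lt_one hq
  rw [mul_sum, ← sum_sub_distrib, sum_T3Term_sub_sum_T3Term_succ hq, PiProd_succ m]
  have := PiProd_ne_zero hq (2 * (m + 1) + 1)
  have := PiProd_ne_zero ha m
  have := PiProd_ne_zero ha (s + 1)
  have := one_sub_pow_succ_ne_zero ha m
  field_simp

end

theorem T_three_identity (q : ℝ) (hq0 : 0 < q) (hq1 : q < 1) (k s : ℕ) :
    T q 3 k s =
      (PiProd k (q ^ 2) / PiProd (2 * k + 1) q) *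
        (1 - q - q ^ (3 * s + 3) * ∑ j ∈ Finset.range k,
          q ^ (2 * j) * PiProd (2 * j + 1) q * PiProd (j + s) (q ^ 2) /
            (PiProd j (q ^ 2) ^ 2 * PiProd s (q ^ 2))) := by
  have hq : |q| < 1 := abs_lt.mpr ⟨by linarith, hq1⟩
  have ha := abs_sq_lt_one hq
  change T q 3 k s = _ * (1 - q - q ^ (3 * s + 3) * ∑ j ∈ range k, T3Term q s j)
  rcases k with _ | m
  · simp [T, PiProd_succ, sub_ne_zero.mpr hq1.ne']
  induction s with
  | zero =>
    rw [T_succ_zero q 3 m (PiProd_ne_zero ha m), Nat.mul_zero, zero_add,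
      one_sub_sub_sum_T3Term_zero hq, div_mul_div_cancel₀ (PiProd_ne_zero hq _),
      div_self (PiProd_ne_zero ha _)]
  | succ s ih =>
    rw [T_succ_succ, ih]
    linear_combination -q ^ (3 * s + 3) * PiProd_div_mul_sum_T3Term_sub hq m s
end
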